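/- Second noncommutative q-Chu–Vandermonde summation of type II: Let A and C be elements of a unit ring R, let Q be an invertible element of R commuting with both A and C, and let n be a nonnegative integer. Then Σ_{k=0}^{n} ⌊A, Q^{−n}; C, Q; Q, A^{−1}CQ^{n}⌉_k = ⌊A^{−1}CQ; C; Q, I⌉_n · (I−A^{−1}CQ^{n})^{−1} · (I−A^{−1}C), i.e. the terminating noncommutative basic hypergeometric series of type II with argument A^{−1}CQ^{n}, ₂φ₁⌊A, Q^{−n}; C; Q, A^{−1}CQ^{n}⌉, equals the type II noncommutative Q-shifted factorial ⌊A^{−1}CQ; C; Q, I⌉_n multiplied on the right by (I−A^{−1}CQ^{n})^{−1}(I−A^{−1}C). -/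
import Mathlib


/-- Ordered (noncommutative) product `f 0 * f 1 * ⋯ * f (n-1)`. -/
def opr {R : Type*} [Ring R] (n : ℕ) (f : ℕ → R) : R :=
  ((List.range n).map f).prod

namespace NCQCV

open Polynomial

variable {R : Type*} [Ring R]

theorem opr_zero (f : ℕ → R) : opr 0 f = 1 := rfl

theorem opr_succ (n : ℕ) (f : ℕ → R) : opr (n + 1) f = opr n f * f n := by
  simp [opr, List.range_succ]

theorem opr_succ' (n : ℕ) (f : ℕ → R) :
    opr (n + 1) f = f 0 * opr n (fun j => f (j + 1)) := by
  simp [opr, List.range_succ_eq_map, List.map_map, Function.comp_def]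

theorem opr_congr {n : ℕ} {f g : ℕ → R} (h : ∀ j < n, f j = g j) : opr n f = opr n g := by
  unfold opr
  exact congrArg List.prod (List.map_congr_left fun a ha => h a (List.mem_range.mp ha))

theorem commute_opr {x : R} {f : ℕ → R} {n : ℕ} (h : ∀ j < n, Commute x (f j)) :
    Commute x (opr n f) := by
  induction n with
  | zero => exact Commute.one_right x
  | succ n ih =>
      rw [opr_succ]
      exact (ih fun j hj => h j (Nat.lt_succ_of_lt hj)).mul_right (h n (Nat.lt_succ_self n))

theorem commute_ringInverse {x y : R} (h : Commute x y) : Commute x (Ring.inverse y) := by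
  by_cases hy : IsUnit y
  · obtain ⟨u, rfl⟩ := hy
    rw [Ring.inverse_unit]
    exact h.units_inv_right
  · rw [Ring.inverse_non_unit _ hy]
    exact Commute.zero_right x

/-- Evaluation of integer polynomials at `Q`. -/
noncomputable def qmap (Q : R) : Polynomial ℤ →+* R :=
  Polynomial.eval₂RingHom' (Int.castRingHom R) Q fun a => Int.cast_commute a Q

theorem qmap_X (Q : R) : qmap Q X = Q := by
  simp [qmap, Polynomial.eval₂_X]

/-- The scalar `q`-identity used in the `q`-Pascal recurrence. -/
theorem qscalar (Q : R) (n k : ℕ) :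
    (Q ^ n - Q ^ k) * (Q * Q ^ n - Q ^ n) =
      Q ^ n * ((1 - Q * Q ^ k) * (Q ^ (n + 1) - Q ^ (k + 1)) -
        (1 - Q * Q ^ (k + 1)) * (Q ^ n - Q ^ k)) := by
  have h : ((X : ℤ[X]) ^ n - X ^ k) * (X * X ^ n - X ^ n) =
      X ^ n * ((1 - X * X ^ k) * (X ^ (n + 1) - X ^ (k + 1)) -
        (1 - X * X ^ (k + 1)) * (X ^ n - X ^ k)) := by ring
  have h2 := congrArg (qmap Q) h
  simpa only [map_sub, map_mul, map_pow, map_one, qmap_X] using h2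

/-! ### The building blocks -/

/-- `W j = (1 - C Q^j)⁻¹ (D - C Q^j)`. -/
noncomputable def Wf (Q C D : R) (j : ℕ) : R :=
  Ring.inverse (1 - C * Q ^ j) * (D - C * Q ^ j)

/-- `γ n j = (1 - Q^{j+1})⁻¹ (Q^n - Q^j)`. -/
noncomputable def gf (Q : R) (n j : ℕ) : R :=
  Ring.inverse (1 - Q * Q ^ j) * (Q ^ n - Q ^ j)

/-- `P n = ∏_{j<n} (1 - C Q^j)⁻¹ (1 - D Q^{j+1})`. -/
noncomputable def Pf (Q C D : R) (n : ℕ) : R :=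
  opr n (fun j => Ring.inverse (1 - C * Q ^ j) * (1 - D * (Q * Q ^ j)))

/-- `S n = ∑_{k≤n} (∏_{j<k} W j) (∏_{j<k} γ n j)`. -/
noncomputable def Sf (Q C D : R) (n : ℕ) : R :=
  ∑ k ∈ Finset.range (n + 1), opr k (Wf Q C D) * opr k (gf Q n)

/-! ### Commutation lemmas -/

theorem comm_e {x Q : R} (hx : Commute x Q) (j : ℕ) :
    Commute x (Ring.inverse (1 - Q * Q ^ j)) :=
  commute_ringInverse ((Commute.one_right x).sub_right (hx.mul_right (hx.pow_right j)))

theorem comm_gf {x Q : R} (hx : Commute x Q) (n j : ℕ) : Commute x (gf Q n j) :=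
  (comm_e hx j).mul_right ((hx.pow_right n).sub_right (hx.pow_right j))

theorem comm_c {x Q C : R} (hx : Commute x Q) (hxC : Commute x C) (j : ℕ) :
    Commute x (Ring.inverse (1 - C * Q ^ j)) :=
  commute_ringInverse ((Commute.one_right x).sub_right (hxC.mul_right (hx.pow_right j)))

theorem comm_Wf {x Q C D : R} (hx : Commute x Q) (hxC : Commute x C) (hxD : Commute x D)
    (j : ℕ) : Commute x (Wf Q C D j) :=
  (comm_c hx hxC j).mul_right (hxD.sub_right (hxC.mul_right (hx.pow_right j)))

theorem comm_Pf {x Q C D : R} (hx : Commute x Q) (hxC : Commute x C) (hxD : Commute x D)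
    (n : ℕ) : Commute x (Pf Q C D n) :=
  commute_opr fun j _ => (comm_c hx hxC j).mul_right
    ((Commute.one_right x).sub_right (hxD.mul_right (hx.mul_right (hx.pow_right j))))

theorem comm_opr_Wf {x Q C D : R} (hx : Commute x Q) (hxC : Commute x C) (hxD : Commute x D)
    (k : ℕ) : Commute x (opr k (Wf Q C D)) :=
  commute_opr fun j _ => comm_Wf hx hxC hxD j

theorem comm_opr_gf {x Q : R} (hx : Commute x Q) (n k : ℕ) :
    Commute x (opr k (gf Q n)) :=
  commute_opr fun j _ => comm_gf hx n j

/-! ### Splitting products of `W`'s and `γ`'s -/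

theorem opr_split (Q C D : R) (hQC : Commute Q C) (hQD : Commute Q D) (n k : ℕ) :
    opr k (fun j => Wf Q C D j * gf Q n j) = opr k (Wf Q C D) * opr k (gf Q n) := by
  induction k with
  | zero => simp [opr_zero]
  | succ k ih =>
      rw [opr_succ, opr_succ, opr_succ, ih]
      have h : Commute (Wf Q C D k) (opr k (gf Q n)) :=
        comm_opr_gf ((comm_Wf (Commute.refl Q) hQC hQD k).symm) n k
      calc opr k (Wf Q C D) * opr k (gf Q n) * (Wf Q C D k * gf Q n k)
          = opr k (Wf Q C D) * (opr k (gf Q n) * Wf Q C D k) * gf Q n k := by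
            rw [mul_assoc, mul_assoc, mul_assoc]
        _ = opr k (Wf Q C D) * (Wf Q C D k * opr k (gf Q n)) * gf Q n k := by
            rw [h.symm.eq]
        _ = opr k (Wf Q C D) * Wf Q C D k * (opr k (gf Q n) * gf Q n k) := by
            rw [mul_assoc, mul_assoc, mul_assoc]

/-! ### The `q`-Pascal recurrence for the central factors -/

theorem pascalE (Q : R) (n k : ℕ) (hx : IsUnit (1 - Q * Q ^ k))
    (hy : IsUnit (1 - Q * Q ^ (k + 1))) :
    gf Q n k * (gf Q (n + 1) (k + 1) - gf Q n (k + 1)) =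
      Q ^ n * (gf Q (n + 1) (k + 1) - gf Q n k) := by
  simp only [gf]
  set x := Ring.inverse (1 - Q * Q ^ k) with hxdef
  set y := Ring.inverse (1 - Q * Q ^ (k + 1)) with hydef
  have cQx : Commute Q x := comm_e (Commute.refl Q) k
  have cQy : Commute Q y := comm_e (Commute.refl Q) (k + 1)
  have cyu : Commute y (1 - Q * Q ^ k) :=
    (Commute.one_right y).sub_right ((cQy.symm).mul_right ((cQy.symm).pow_right k))
  have cys : Commute y (Q ^ n - Q ^ k) :=
    ((cQy.symm).pow_right n).sub_right ((cQy.symm).pow_right k)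
  have cxy : Commute (Q ^ n) (x * y) := (cQx.pow_left n).mul_right (cQy.pow_left n)
  have h1 : y * (Q ^ (n + 1) - Q ^ (k + 1)) - y * (Q ^ n - Q ^ (k + 1)) =
      y * (Q * Q ^ n - Q ^ n) := by
    rw [← mul_sub]
    congr 1
    rw [pow_succ']
    noncomm_ring
  have hy1 : y * (Q ^ (n + 1) - Q ^ (k + 1)) =
      x * (y * ((1 - Q * Q ^ k) * (Q ^ (n + 1) - Q ^ (k + 1)))) := by
    rw [← mul_assoc y, cyu.eq, mul_assoc, ← mul_assoc x,
      Ring.inverse_mul_cancel _ hx, one_mul]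
  have hx1 : x * (Q ^ n - Q ^ k) = x * (y * ((1 - Q * Q ^ (k + 1)) * (Q ^ n - Q ^ k))) := by
    rw [← mul_assoc y, Ring.inverse_mul_cancel _ hy, one_mul]
  have hmove : ∀ S : R, x * (y * (Q ^ n * S)) = Q ^ n * (x * (y * S)) := by
    intro S
    calc x * (y * (Q ^ n * S)) = (x * y) * Q ^ n * S := by simp only [mul_assoc]
      _ = Q ^ n * (x * y) * S := by rw [← cxy.eq]
      _ = Q ^ n * (x * (y * S)) := by simp only [mul_assoc]
  rw [h1]
  calc x * (Q ^ n - Q ^ k) * (y * (Q * Q ^ n - Q ^ n))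
      = x * (y * ((Q ^ n - Q ^ k) * (Q * Q ^ n - Q ^ n))) := by
        rw [mul_assoc, ← mul_assoc (Q ^ n - Q ^ k), cys.symm.eq, mul_assoc]
    _ = x * (y * (Q ^ n * ((1 - Q * Q ^ k) * (Q ^ (n + 1) - Q ^ (k + 1)) -
          (1 - Q * Q ^ (k + 1)) * (Q ^ n - Q ^ k)))) := by rw [qscalar]
    _ = Q ^ n * (x * (y * ((1 - Q * Q ^ k) * (Q ^ (n + 1) - Q ^ (k + 1)) -
          (1 - Q * Q ^ (k + 1)) * (Q ^ n - Q ^ k)))) := hmove _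
    _ = Q ^ n * (x * (y * ((1 - Q * Q ^ k) * (Q ^ (n + 1) - Q ^ (k + 1)))) -
          x * (y * ((1 - Q * Q ^ (k + 1)) * (Q ^ n - Q ^ k)))) := by
        rw [mul_sub y, mul_sub x]
    _ = Q ^ n * (y * (Q ^ (n + 1) - Q ^ (k + 1)) - x * (Q ^ n - Q ^ k)) := by
        rw [← hy1, ← hx1]

theorem pascal (Q : R) (n k : ℕ) (hq : ∀ m ≤ k, IsUnit (1 - Q * Q ^ m)) :
    opr (k + 1) (gf Q (n + 1)) = opr (k + 1) (gf Q n) - Q ^ n * opr k (gf Q n) := by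
  induction k with
  | zero =>
      simp only [opr_succ, opr_zero, one_mul, mul_one]
      simp only [gf]
      rw [eq_sub_iff_add_eq]
      have hx : Ring.inverse (1 - Q * Q ^ 0) * (1 - Q * Q ^ 0) = 1 :=
        Ring.inverse_mul_cancel _ (hq 0 le_rfl)
      calc Ring.inverse (1 - Q * Q ^ 0) * (Q ^ (n + 1) - Q ^ 0) + Q ^ n
          = Ring.inverse (1 - Q * Q ^ 0) * (Q ^ (n + 1) - Q ^ 0) +
            Ring.inverse (1 - Q * Q ^ 0) * ((1 - Q * Q ^ 0) * Q ^ n) := by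
            rw [← mul_assoc, hx, one_mul]
        _ = Ring.inverse (1 - Q * Q ^ 0) * ((Q ^ (n + 1) - Q ^ 0) + (1 - Q * Q ^ 0) * Q ^ n) := by
            rw [mul_add]
        _ = Ring.inverse (1 - Q * Q ^ 0) * (Q ^ n - Q ^ 0) := by
            congr 1
            rw [pow_succ', pow_zero]
            noncomm_ring
  | succ k ih =>
      have ih' := ih fun m hm => hq m (Nat.le_succ_of_le hm)
      have key := pascalE Q n k (hq k (Nat.le_succ k)) (hq (k + 1) le_rfl)
      have cB : Commute (Q ^ n) (opr k (gf Q n)) :=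
        comm_opr_gf ((Commute.refl Q).pow_left n) n k
      rw [opr_succ (k + 1), ih', sub_mul, opr_succ (k + 1) (gf Q n), opr_succ k (gf Q n)]
      set A := opr k (gf Q n) with hA
      set g1 := gf Q n k with hg1
      set g2 := gf Q (n + 1) (k + 1) with hg2
      set g3 := gf Q n (k + 1) with hg3
      rw [sub_eq_sub_iff_sub_eq_sub]
      calc A * g1 * g2 - A * g1 * g3 = A * (g1 * (g2 - g3)) := by
            rw [← mul_sub (A * g1), mul_assoc]
        _ = A * (Q ^ n * (g2 - g1)) := by rw [key]
        _ = Q ^ n * A * (g2 - g1) := by rw [← mul_assoc, cB.symm.eq]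
        _ = Q ^ n * A * g2 - Q ^ n * (A * g1) := by
            rw [mul_sub, mul_assoc (Q ^ n) A g1]

theorem opr_gf_top (Q : R) (n : ℕ) : opr (n + 1) (gf Q n) = 0 := by
  rw [opr_succ]
  have h : gf Q n n = 0 := by rw [gf, sub_self, mul_zero]
  rw [h, mul_zero]

/-! ### The swap identity -/

theorem swap (Q C D : R) (hQ : IsUnit Q) (hQC : Commute Q C) (hQD : Commute Q D)
    (m : ℕ) (hc : IsUnit (1 - C * Q ^ m)) :
    (1 - D * Q ^ m) * Ring.inverse (1 - C * Q ^ m) * (D - C) =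
      (D - C) * Ring.inverse (1 - C * Q ^ m) * (1 - D * Q ^ m) := by
  set c := (1 : R) - C * Q ^ m with hcdef
  set v := (1 : R) - D * Q ^ m with hvdef
  set ci := Ring.inverse c with hcidef
  set qi := Ring.inverse (Q ^ m) with hqidef
  have hqm : IsUnit (Q ^ m) := hQ.pow m
  have hDC : D - C = (c - v) * qi := by
    have h : c - v = (D - C) * Q ^ m := by rw [hcdef, hvdef]; noncomm_ring
    rw [h, mul_assoc, Ring.mul_inverse_cancel _ hqm, mul_one]
  have cvQm : Commute v (Q ^ m) :=
    (Commute.one_left (Q ^ m)).sub_left ((hQD.symm.pow_right m).mul_left (Commute.refl (Q ^ m)))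
  have ccQm : Commute c (Q ^ m) :=
    (Commute.one_left (Q ^ m)).sub_left ((hQC.symm.pow_right m).mul_left (Commute.refl (Q ^ m)))
  have cqiv : Commute qi v := (commute_ringInverse cvQm).symm
  have cqic : Commute qi c := (commute_ringInverse ccQm).symm
  have cqici : Commute qi ci := commute_ringInverse cqic
  have hcic : ci * c = 1 := Ring.inverse_mul_cancel _ hc
  have hcci : c * ci = 1 := Ring.mul_inverse_cancel _ hc
  have hL : v * ci * (D - C) = (v - v * ci * v) * qi := by
    rw [hDC, ← mul_assoc, mul_sub (v * ci), mul_assoc v ci c, hcic, mul_one]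
  have hR : (D - C) * ci * v = (v - v * ci * v) * qi := by
    rw [hDC, mul_assoc (c - v) qi ci, cqici.eq, ← mul_assoc, mul_assoc ((c - v) * ci) qi v,
      cqiv.eq, ← mul_assoc, sub_mul c v ci, hcci, sub_mul, one_mul, mul_assoc v ci v]
  rw [hL, hR]

/-! ### The key product identity (star) -/

theorem star (Q D : R) (hQ : IsUnit Q) (hQD : Commute Q D) :
    ∀ (n : ℕ) (C : R), Commute Q C → (∀ m, m ≤ n → IsUnit (1 - C * Q ^ m)) →
    Pf Q C D n * Ring.inverse (1 - C * Q ^ n) * (D - C) =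
      Wf Q C D 0 * Pf Q (C * Q) D n := by
  intro n
  induction n with
  | zero =>
      intro C hQC hC
      simp [Pf, opr_zero, Wf, pow_zero, mul_one, one_mul]
  | succ n ih =>
      intro C hQC hC
      have hC' : ∀ m, m ≤ n → IsUnit (1 - C * Q ^ m) := fun m hm => hC m (Nat.le_succ_of_le hm)
      have hP : Pf Q C D (n + 1) =
          Pf Q C D n * (Ring.inverse (1 - C * Q ^ n) * (1 - D * (Q * Q ^ n))) :=
        opr_succ n _
      have hP' : Pf Q (C * Q) D (n + 1) =
          Pf Q (C * Q) D n * (Ring.inverse (1 - C * Q * Q ^ n) * (1 - D * (Q * Q ^ n))) :=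
        opr_succ n _
      have hkey := swap Q C D hQ hQC hQD (n + 1) (hC (n + 1) le_rfl)
      have hkey' : (1 - D * Q ^ (n + 1)) * (Ring.inverse (1 - C * Q ^ (n + 1)) * (D - C)) =
          (D - C) * (Ring.inverse (1 - C * Q ^ (n + 1)) * (1 - D * Q ^ (n + 1))) := by
        rw [← mul_assoc, hkey, mul_assoc]
      have hCQn : C * Q * Q ^ n = C * Q ^ (n + 1) := by rw [mul_assoc, ← pow_succ']
      calc Pf Q C D (n + 1) * Ring.inverse (1 - C * Q ^ (n + 1)) * (D - C)
          = Pf Q C D n * (Ring.inverse (1 - C * Q ^ n) * ((1 - D * Q ^ (n + 1)) *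
              (Ring.inverse (1 - C * Q ^ (n + 1)) * (D - C)))) := by
            rw [hP, ← pow_succ']
            simp only [mul_assoc]
        _ = Pf Q C D n * (Ring.inverse (1 - C * Q ^ n) * ((D - C) *
              (Ring.inverse (1 - C * Q ^ (n + 1)) * (1 - D * Q ^ (n + 1))))) := by
            rw [hkey']
        _ = (Pf Q C D n * Ring.inverse (1 - C * Q ^ n) * (D - C)) *
              (Ring.inverse (1 - C * Q ^ (n + 1)) * (1 - D * Q ^ (n + 1))) := by
            simp only [mul_assoc]
        _ = (Wf Q C D 0 * Pf Q (C * Q) D n) *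
              (Ring.inverse (1 - C * Q ^ (n + 1)) * (1 - D * Q ^ (n + 1))) := by
            rw [ih C hQC hC']
        _ = Wf Q C D 0 * Pf Q (C * Q) D (n + 1) := by
            rw [hP', hCQn, ← pow_succ']
            simp only [mul_assoc]

/-! ### The core summation -/

theorem core (Q D : R) (hQ : IsUnit Q) (hQD : Commute Q D) :
    ∀ (n : ℕ) (C : R), Commute Q C → (∀ m, m ≤ n → IsUnit (1 - C * Q ^ m)) →
      (∀ m, m ≤ n → IsUnit (1 - Q * Q ^ m)) →
      Sf Q C D (n + 1) = Pf Q C D n * Ring.inverse (1 - C * Q ^ n) * (1 - D) := by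
  intro n
  induction n with
  | zero =>
      intro C hQC hC hq
      have o1 : ∀ f : ℕ → R, opr 1 f = f 0 := fun f => by rw [opr_succ, opr_zero, one_mul]
      have hg : gf Q 1 0 = -1 := by
        rw [gf]
        have h : (Q : R) ^ 1 - Q ^ 0 = -(1 - Q * Q ^ 0) := by
          rw [pow_one, pow_zero]; noncomm_ring
        rw [h, mul_neg, Ring.inverse_mul_cancel _ (hq 0 le_rfl)]
      have h0 : Sf Q C D (0 + 1) = 1 - Wf Q C D 0 := by
        have e : Sf Q C D (0 + 1) =
            ∑ k ∈ Finset.range (0 + 1 + 1), opr k (Wf Q C D) * opr k (gf Q (0 + 1)) := rfl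
        rw [e, Finset.sum_range_succ, Finset.sum_range_one, opr_zero, opr_zero, one_mul,
          o1, o1]
        have e2 : gf Q (0 + 1) 0 = gf Q 1 0 := rfl
        rw [e2, hg, mul_neg_one, ← sub_eq_add_neg]
      have hsum : Ring.inverse (1 - C * Q ^ 0) * (1 - D) + Wf Q C D 0 = 1 := by
        rw [Wf, ← mul_add]
        have h2 : (1 - D) + (D - C * Q ^ 0) = 1 - C * Q ^ 0 := by noncomm_ring
        rw [h2, Ring.inverse_mul_cancel _ (hC 0 le_rfl)]
      have hPf0 : Pf Q C D 0 = 1 := rfl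
      rw [hPf0, one_mul, h0]
      exact (eq_sub_of_add_eq hsum).symm
  | succ n ih =>
      intro C hQC hC hq
      have hq' : ∀ m, m ≤ n → IsUnit (1 - Q * Q ^ m) := fun m hm => hq m (Nat.le_succ_of_le hm)
      have hC' : ∀ m, m ≤ n → IsUnit (1 - C * Q ^ m) := fun m hm => hC m (Nat.le_succ_of_le hm)
      have hQCQ : Commute Q (C * Q) := hQC.mul_right (Commute.refl Q)
      have hCQ : ∀ m, m ≤ n → IsUnit (1 - C * Q * Q ^ m) := by
        intro m hm
        rw [mul_assoc, ← pow_succ']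
        exact hC (m + 1) (Nat.succ_le_succ hm)
      have hCn1 : IsUnit (1 - C * Q ^ (n + 1)) := hC (n + 1) le_rfl
      have cQQ : Commute (Q ^ (n + 1)) Q := (Commute.refl Q).pow_left (n + 1)
      have cQC : Commute (Q ^ (n + 1)) C := hQC.pow_left (n + 1)
      have cQD : Commute (Q ^ (n + 1)) D := hQD.pow_left (n + 1)
      have cQCQ : Commute (Q ^ (n + 1)) (C * Q) := cQC.mul_right cQQ
      -- Step 1 : the sum recurrence
      have hterm : ∀ i ∈ Finset.range (n + 1 + 1),
          opr (i + 1) (Wf Q C D) * opr (i + 1) (gf Q (n + 1 + 1)) =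
            opr (i + 1) (Wf Q C D) * opr (i + 1) (gf Q (n + 1)) -
              Q ^ (n + 1) * (Wf Q C D 0 * (opr i (Wf Q (C * Q) D) * opr i (gf Q (n + 1)))) := by
        intro i hi
        have hi' : i ≤ n + 1 := Nat.lt_succ_iff.mp (Finset.mem_range.mp hi)
        have hWshift : opr i (fun j => Wf Q C D (j + 1)) = opr i (Wf Q (C * Q) D) := by
          apply opr_congr
          intro j _
          rw [Wf, Wf]
          simp only [pow_succ', ← mul_assoc]
        rw [pascal Q (n + 1) i fun m hm => hq m (le_trans hm hi'), mul_sub]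
        congr 1
        rw [opr_succ' i (Wf Q C D), hWshift]
        have cc : Commute (Q ^ (n + 1)) (Wf Q C D 0 * opr i (Wf Q (C * Q) D)) :=
          (comm_Wf cQQ cQC cQD 0).mul_right (comm_opr_Wf cQQ cQCQ cQD i)
        calc Wf Q C D 0 * opr i (Wf Q (C * Q) D) * (Q ^ (n + 1) * opr i (gf Q (n + 1)))
            = Wf Q C D 0 * opr i (Wf Q (C * Q) D) * Q ^ (n + 1) * opr i (gf Q (n + 1)) := by
              simp only [← mul_assoc]
          _ = Q ^ (n + 1) * (Wf Q C D 0 * opr i (Wf Q (C * Q) D)) * opr i (gf Q (n + 1)) := by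
              rw [← cc.eq]
          _ = Q ^ (n + 1) * (Wf Q C D 0 * (opr i (Wf Q (C * Q) D) * opr i (gf Q (n + 1)))) := by
              simp only [mul_assoc]
      have hsplit : Sf Q C D (n + 1 + 1) =
          Sf Q C D (n + 1) - Q ^ (n + 1) * (Wf Q C D 0 * Sf Q (C * Q) D (n + 1)) := by
        have e2 : Sf Q C D (n + 1 + 1) =
            ∑ k ∈ Finset.range (n + 1 + 1 + 1), opr k (Wf Q C D) * opr k (gf Q (n + 1 + 1)) :=
          rfl
        have e3 : Sf Q (C * Q) D (n + 1) =
            ∑ i ∈ Finset.range (n + 1 + 1), opr i (Wf Q (C * Q) D) * opr i (gf Q (n + 1)) := rfl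
        rw [e2, Finset.sum_range_succ', Finset.sum_congr rfl hterm, Finset.sum_sub_distrib,
          ← Finset.mul_sum, ← Finset.mul_sum, ← e3]
        have h1 : (∑ i ∈ Finset.range (n + 1 + 1),
            opr (i + 1) (Wf Q C D) * opr (i + 1) (gf Q (n + 1))) +
            opr 0 (Wf Q C D) * opr 0 (gf Q (n + 1 + 1)) = Sf Q C D (n + 1) := by
          have h2 : opr 0 (Wf Q C D) * opr 0 (gf Q (n + 1 + 1)) =
              opr 0 (Wf Q C D) * opr 0 (gf Q (n + 1)) := rfl
          have e4 := Finset.sum_range_succ'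
            (fun k => opr k (Wf Q C D) * opr k (gf Q (n + 1))) (n + 1 + 1)
          rw [h2, ← e4, Finset.sum_range_succ, opr_gf_top, mul_zero, add_zero]
          rfl
        rw [sub_add_eq_add_sub, h1]
      rw [hsplit, ih C hQC hC' hq', ih (C * Q) hQCQ hCQ hq']
      have hCQn : C * Q * Q ^ n = C * Q ^ (n + 1) := by rw [mul_assoc, ← pow_succ']
      rw [hCQn]
      have hP : Pf Q C D (n + 1) =
          Pf Q C D n * (Ring.inverse (1 - C * Q ^ n) * (1 - D * (Q * Q ^ n))) :=
        opr_succ n _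
      have hvc : (1 - D * Q ^ (n + 1)) * Ring.inverse (1 - C * Q ^ (n + 1)) =
          1 - (D - C) * (Q ^ (n + 1) * Ring.inverse (1 - C * Q ^ (n + 1))) := by
        have h1 : (1 : R) - D * Q ^ (n + 1) =
            (1 - C * Q ^ (n + 1)) - (D - C) * Q ^ (n + 1) := by noncomm_ring
        rw [h1, sub_mul, Ring.mul_inverse_cancel _ hCn1, mul_assoc]
      have hstar := star Q D hQ hQD n C hQC hC'
      have hsuff : Pf Q C D n * (Ring.inverse (1 - C * Q ^ n) * ((D - C) *
            (Q ^ (n + 1) * (Ring.inverse (1 - C * Q ^ (n + 1)) * (1 - D))))) =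
          Q ^ (n + 1) * (Wf Q C D 0 * (Pf Q (C * Q) D n *
            Ring.inverse (1 - C * Q ^ (n + 1)) * (1 - D))) := by
        have c1 : Q ^ (n + 1) * Pf Q (C * Q) D n = Pf Q (C * Q) D n * Q ^ (n + 1) :=
          (comm_Pf cQQ cQCQ cQD n).eq
        have c2 : Q ^ (n + 1) * Wf Q C D 0 = Wf Q C D 0 * Q ^ (n + 1) :=
          (comm_Wf cQQ cQC cQD 0).eq
        calc Pf Q C D n * (Ring.inverse (1 - C * Q ^ n) * ((D - C) *
              (Q ^ (n + 1) * (Ring.inverse (1 - C * Q ^ (n + 1)) * (1 - D)))))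
            = (Pf Q C D n * Ring.inverse (1 - C * Q ^ n) * (D - C)) *
              (Q ^ (n + 1) * (Ring.inverse (1 - C * Q ^ (n + 1)) * (1 - D))) := by
              simp only [mul_assoc]
          _ = (Wf Q C D 0 * Pf Q (C * Q) D n) *
              (Q ^ (n + 1) * (Ring.inverse (1 - C * Q ^ (n + 1)) * (1 - D))) := by
              rw [hstar]
          _ = Wf Q C D 0 * (Pf Q (C * Q) D n * Q ^ (n + 1)) *
              (Ring.inverse (1 - C * Q ^ (n + 1)) * (1 - D)) := by
              simp only [mul_assoc]
          _ = Wf Q C D 0 * (Q ^ (n + 1) * Pf Q (C * Q) D n) *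
              (Ring.inverse (1 - C * Q ^ (n + 1)) * (1 - D)) := by rw [c1]
          _ = (Wf Q C D 0 * Q ^ (n + 1)) * (Pf Q (C * Q) D n *
              (Ring.inverse (1 - C * Q ^ (n + 1)) * (1 - D))) := by
              simp only [mul_assoc]
          _ = (Q ^ (n + 1) * Wf Q C D 0) * (Pf Q (C * Q) D n *
              (Ring.inverse (1 - C * Q ^ (n + 1)) * (1 - D))) := by rw [← c2]
          _ = Q ^ (n + 1) * (Wf Q C D 0 * (Pf Q (C * Q) D n *
              Ring.inverse (1 - C * Q ^ (n + 1)) * (1 - D))) := by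
              simp only [mul_assoc]
      symm
      calc Pf Q C D (n + 1) * Ring.inverse (1 - C * Q ^ (n + 1)) * (1 - D)
          = Pf Q C D n * (Ring.inverse (1 - C * Q ^ n) * ((1 - D * Q ^ (n + 1)) *
              (Ring.inverse (1 - C * Q ^ (n + 1)) * (1 - D)))) := by
            rw [hP, ← pow_succ']
            simp only [mul_assoc]
        _ = Pf Q C D n * (Ring.inverse (1 - C * Q ^ n) *
              ((1 - (D - C) * (Q ^ (n + 1) * Ring.inverse (1 - C * Q ^ (n + 1)))) * (1 - D))) := by
            rw [← mul_assoc (1 - D * Q ^ (n + 1)), hvc]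
        _ = Pf Q C D n * (Ring.inverse (1 - C * Q ^ n) * (1 - D)) -
              Pf Q C D n * (Ring.inverse (1 - C * Q ^ n) * ((D - C) *
                (Q ^ (n + 1) * (Ring.inverse (1 - C * Q ^ (n + 1)) * (1 - D))))) := by
            rw [sub_mul, one_mul, mul_sub, mul_sub]
            simp only [mul_assoc]
        _ = Pf Q C D n * Ring.inverse (1 - C * Q ^ n) * (1 - D) -
              Q ^ (n + 1) * (Wf Q C D 0 * (Pf Q (C * Q) D n *
                Ring.inverse (1 - C * Q ^ (n + 1)) * (1 - D))) := by
            rw [hsuff, ← mul_assoc]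

end NCQCV

open NCQCV in
/-- Second noncommutative q-Chu–Vandermonde summation of type II:
`₂φ₁⌊A, Q⁻ⁿ; C; Q, A⁻¹CQⁿ⌉ = ⌊A⁻¹CQ; C; Q, I⌉_n (I−A⁻¹CQⁿ)⁻¹ (I−A⁻¹C)`. -/
theorem ncQChuVandermonde2II {R : Type*} [Ring R] (A C Q : R) (n : ℕ)
    (hQ : IsUnit Q) (hA : IsUnit A)
    (hQA : Q * A = A * Q) (hQC : Q * C = C * Q)
    (hC : ∀ m : ℕ, m < n → IsUnit (1 - C * Q ^ m))
    (hq : ∀ m : ℕ, m < n → IsUnit (1 - Q ^ (m + 1)))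
    (hACn : IsUnit (1 - Ring.inverse A * C * Q ^ n)) :
    (∑ k ∈ Finset.range (n + 1),
      opr k (fun j =>
        Ring.inverse (1 - C * Q ^ j) * (1 - A * Q ^ j) *
        (Ring.inverse (1 - Q * Q ^ j) *
          (1 - Ring.inverse (Q ^ n) * Q ^ j) *
          (Ring.inverse A * C * Q ^ n)))) =
    opr n (fun j =>
      Ring.inverse (1 - C * Q ^ j) * (1 - Ring.inverse A * C * Q * Q ^ j)) *
      Ring.inverse (1 - Ring.inverse A * C * Q ^ n) * (1 - Ring.inverse A * C) := by
  have hQA' : Commute Q A := hQA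
  have hQC' : Commute Q C := hQC
  have hQAi : Commute Q (Ring.inverse A) := commute_ringInverse hQA'
  rcases n with _ | m
  · -- n = 0
    rw [Finset.sum_range_one]
    have h1 : opr 0 (fun j =>
        Ring.inverse (1 - C * Q ^ j) * (1 - A * Q ^ j) *
        (Ring.inverse (1 - Q * Q ^ j) *
          (1 - Ring.inverse (Q ^ 0) * Q ^ j) *
          (Ring.inverse A * C * Q ^ 0))) = 1 := rfl
    have h2 : opr 0 (fun j =>
        Ring.inverse (1 - C * Q ^ j) * (1 - Ring.inverse A * C * Q * Q ^ j)) = 1 := rfl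
    rw [h1, h2, one_mul]
    rw [pow_zero, mul_one] at hACn
    rw [pow_zero, mul_one]
    exact (Ring.inverse_mul_cancel _ hACn).symm
  · -- n = m + 1
    set D := Ring.inverse A * C with hD
    have hQD : Commute Q D := hQAi.mul_right hQC'
    have hC'' : ∀ m', m' ≤ m → IsUnit (1 - C * Q ^ m') :=
      fun m' h => hC m' (Nat.lt_succ_of_le h)
    have hq'' : ∀ m', m' ≤ m → IsUnit (1 - Q * Q ^ m') := by
      intro m' h
      have h3 := hq m' (Nat.lt_succ_of_le h)
      rwa [pow_succ'] at h3
    -- term conversion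
    have hterm : ∀ j : ℕ,
        Ring.inverse (1 - C * Q ^ j) * (1 - A * Q ^ j) *
          (Ring.inverse (1 - Q * Q ^ j) * (1 - Ring.inverse (Q ^ (m + 1)) * Q ^ j) *
            (D * Q ^ (m + 1))) = Wf Q C D j * gf Q (m + 1) j := by
      intro j
      rw [hD]
      have cQnA : Commute (Ring.inverse (Q ^ (m + 1))) (Ring.inverse A) :=
        commute_ringInverse ((commute_ringInverse (hQA'.pow_left (m + 1)).symm).symm)
      have cQnC : Commute (Ring.inverse (Q ^ (m + 1))) C :=
        (commute_ringInverse (hQC'.pow_left (m + 1)).symm).symm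
      have cQjA : Commute (Q ^ j) (Ring.inverse A) := hQAi.pow_left j
      have cQjC : Commute (Q ^ j) C := hQC'.pow_left j
      have cu_Ai : Commute (Ring.inverse (Q ^ (m + 1)) * Q ^ j) (Ring.inverse A) :=
        cQnA.mul_left cQjA
      have cu_C : Commute (Ring.inverse (Q ^ (m + 1)) * Q ^ j) C := cQnC.mul_left cQjC
      have cQns : Commute (Ring.inverse (Q ^ (m + 1))) (Q ^ j) :=
        (commute_ringInverse ((Commute.refl Q).pow_pow j (m + 1))).symm
      have hinner : (1 - Ring.inverse (Q ^ (m + 1)) * Q ^ j) *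
          (Ring.inverse A * C * Q ^ (m + 1)) =
          Ring.inverse A * C * (Q ^ (m + 1) - Q ^ j) := by
        rw [sub_mul, one_mul, mul_sub]
        congr 1
        calc Ring.inverse (Q ^ (m + 1)) * Q ^ j * (Ring.inverse A * C * Q ^ (m + 1))
            = (Ring.inverse (Q ^ (m + 1)) * Q ^ j * Ring.inverse A) * (C * Q ^ (m + 1)) := by
              simp only [mul_assoc]
          _ = (Ring.inverse A * (Ring.inverse (Q ^ (m + 1)) * Q ^ j)) * (C * Q ^ (m + 1)) := by
              rw [cu_Ai.eq]
          _ = Ring.inverse A * ((Ring.inverse (Q ^ (m + 1)) * Q ^ j * C) * Q ^ (m + 1)) := by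
              simp only [mul_assoc]
          _ = Ring.inverse A * ((C * (Ring.inverse (Q ^ (m + 1)) * Q ^ j)) * Q ^ (m + 1)) := by
              rw [cu_C.eq]
          _ = Ring.inverse A * (C * (Ring.inverse (Q ^ (m + 1)) * Q ^ j * Q ^ (m + 1))) := by
              simp only [mul_assoc]
          _ = Ring.inverse A * (C * (Q ^ j * (Ring.inverse (Q ^ (m + 1)) * Q ^ (m + 1)))) := by
              rw [cQns.eq, mul_assoc]
          _ = Ring.inverse A * C * Q ^ j := by
              rw [Ring.inverse_mul_cancel _ (hQ.pow (m + 1)), mul_one, mul_assoc]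
      have hAj : (1 - A * Q ^ j) * (Ring.inverse A * C) = Ring.inverse A * C - C * Q ^ j := by
        rw [sub_mul, one_mul]
        congr 1
        calc A * Q ^ j * (Ring.inverse A * C)
            = A * (Q ^ j * Ring.inverse A) * C := by simp only [mul_assoc]
          _ = A * (Ring.inverse A * Q ^ j) * C := by rw [cQjA.eq]
          _ = (A * Ring.inverse A) * (Q ^ j * C) := by simp only [mul_assoc]
          _ = C * Q ^ j := by rw [Ring.mul_inverse_cancel _ hA, one_mul, cQjC.eq]
      have caje : Commute (1 - A * Q ^ j) (Ring.inverse (1 - Q * Q ^ j)) :=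
        comm_e ((Commute.one_left Q).sub_left
          ((hQA'.symm).mul_left ((Commute.refl Q).pow_left j))) j
      have ce2 : Commute (Ring.inverse A * C - C * Q ^ j) (Ring.inverse (1 - Q * Q ^ j)) :=
        comm_e (((hQAi.mul_right hQC').symm).sub_left
          ((hQC'.symm).mul_left ((Commute.refl Q).pow_left j))) j
      calc Ring.inverse (1 - C * Q ^ j) * (1 - A * Q ^ j) *
            (Ring.inverse (1 - Q * Q ^ j) * (1 - Ring.inverse (Q ^ (m + 1)) * Q ^ j) *
              (Ring.inverse A * C * Q ^ (m + 1)))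
          = Ring.inverse (1 - C * Q ^ j) * (1 - A * Q ^ j) *
            (Ring.inverse (1 - Q * Q ^ j) * (Ring.inverse A * C * (Q ^ (m + 1) - Q ^ j))) := by
            rw [mul_assoc (Ring.inverse (1 - Q * Q ^ j)), hinner]
        _ = Ring.inverse (1 - C * Q ^ j) * (((1 - A * Q ^ j) * Ring.inverse (1 - Q * Q ^ j)) *
            (Ring.inverse A * C * (Q ^ (m + 1) - Q ^ j))) := by
            simp only [mul_assoc]
        _ = Ring.inverse (1 - C * Q ^ j) * ((Ring.inverse (1 - Q * Q ^ j) * (1 - A * Q ^ j)) *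
            (Ring.inverse A * C * (Q ^ (m + 1) - Q ^ j))) := by
            rw [caje.eq]
        _ = Ring.inverse (1 - C * Q ^ j) * (Ring.inverse (1 - Q * Q ^ j) *
            (((1 - A * Q ^ j) * (Ring.inverse A * C)) * (Q ^ (m + 1) - Q ^ j))) := by
            simp only [mul_assoc]
        _ = Ring.inverse (1 - C * Q ^ j) * (Ring.inverse (1 - Q * Q ^ j) *
            ((Ring.inverse A * C - C * Q ^ j) * (Q ^ (m + 1) - Q ^ j))) := by
            rw [hAj]
        _ = Ring.inverse (1 - C * Q ^ j) * ((Ring.inverse A * C - C * Q ^ j) *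
            (Ring.inverse (1 - Q * Q ^ j) * (Q ^ (m + 1) - Q ^ j))) := by
            rw [← mul_assoc (Ring.inverse (1 - Q * Q ^ j)), ← ce2.eq, mul_assoc]
        _ = Wf Q (C) (Ring.inverse A * C) j * gf Q (m + 1) j := by
            rw [Wf, gf]
            simp only [mul_assoc]
    -- assemble
    have hLHS : (∑ k ∈ Finset.range (m + 1 + 1),
        opr k (fun j =>
          Ring.inverse (1 - C * Q ^ j) * (1 - A * Q ^ j) *
          (Ring.inverse (1 - Q * Q ^ j) *
            (1 - Ring.inverse (Q ^ (m + 1)) * Q ^ j) *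
            (D * Q ^ (m + 1))))) = Sf Q C D (m + 1) := by
      have e : Sf Q C D (m + 1) =
          ∑ k ∈ Finset.range (m + 1 + 1), opr k (Wf Q C D) * opr k (gf Q (m + 1)) := rfl
      rw [e]
      refine Finset.sum_congr rfl fun k _ => ?_
      rw [← opr_split Q C D hQC' hQD (m + 1) k]
      exact opr_congr fun j _ => hterm j
    rw [hLHS, core Q D hQ hQD m C hQC' hC'' hq'']
    have hPm : Pf Q C D (m + 1) =
        Pf Q C D m * (Ring.inverse (1 - C * Q ^ m) * (1 - D * (Q * Q ^ m))) :=
      opr_succ m _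
    have hR1 : opr (m + 1) (fun j => Ring.inverse (1 - C * Q ^ j) * (1 - D * Q * Q ^ j)) =
        Pf Q C D (m + 1) :=
      opr_congr fun j _ => by rw [mul_assoc D Q (Q ^ j)]
    rw [hR1, hPm, ← pow_succ']
    symm
    calc Pf Q C D m * (Ring.inverse (1 - C * Q ^ m) * (1 - D * Q ^ (m + 1))) *
          Ring.inverse (1 - D * Q ^ (m + 1)) * (1 - D)
        = Pf Q C D m * (Ring.inverse (1 - C * Q ^ m) * ((1 - D * Q ^ (m + 1)) *
            (Ring.inverse (1 - D * Q ^ (m + 1)) * (1 - D)))) := by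
          simp only [mul_assoc]
      _ = Pf Q C D m * (Ring.inverse (1 - C * Q ^ m) * (1 - D)) := by
          rw [← mul_assoc (1 - D * Q ^ (m + 1)), Ring.mul_inverse_cancel _ hACn, one_mul]
      _ = Pf Q C D m * Ring.inverse (1 - C * Q ^ m) * (1 - D) := by
          simp only [mul_assoc]
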